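/- For every σ > 0 and μ ∈ ℝ there is exactly one ω ≥ 0 with g₁(ω) = 0; moreover this unique zero ω₁ satisfies ω₁ > |μ|. -/

import Mathlib

/-- `ω coth ω`, interpreted as `1` at `ω = 0`. -/
noncomputable def wcoth (ω : ℝ) : ℝ :=
  if ω = 0 then 1 else ω * Real.cosh ω / Real.sinh ω

/-- `ω / sinh ω`, interpreted as `1` at `ω = 0`. -/
noncomputable def wsinh (ω : ℝ) : ℝ :=
  if ω = 0 then 1 else ω / Real.sinh ω

/-- `g₁(ω) = ω² − 2σ·ω coth ω − 2σ·√(μ² + ω²/sinh²ω) − μ²`. -/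
noncomputable def gm (σ μ ω : ℝ) : ℝ :=
  ω^2 - 2*σ*wcoth ω - 2*σ*Real.sqrt (μ^2 + (wsinh ω)^2) - μ^2

/-- `g₀(ω) = ω² − 2σ·ω coth ω + 2σ·√(μ² + ω²/sinh²ω) − μ²`. -/
noncomputable def gp (σ μ ω : ℝ) : ℝ :=
  ω^2 - 2*σ*wcoth ω + 2*σ*Real.sqrt (μ^2 + (wsinh ω)^2) - μ^2

/-- `μ coth μ`, interpreted as `1` at `μ = 0`. -/
noncomputable def muCoth (μ : ℝ) : ℝ :=
  if μ = 0 then 1 else μ * Real.cosh μ / Real.sinh μ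

/-!
Write `B = ω coth ω`, `W = ω / sinh ω` and `C = √(μ² + W²)`, so that `B² = ω² + W²`. At a zero
of `g₁` we have `ω² − μ² = 2σ(B + C)`, and then `C² = B² − 2σ(B + C)` factors as
`(C + B)(C − B + 2σ) = 0`; hence `C = B − 2σ` and `ω² − μ² = 4σ(B − σ)`. For two zeros `a < b`,
`W` is strictly decreasing (strict convexity of `sinh`), so `C` and with it `B` is smaller at `b`,
while the second identity makes `B` larger at `b`. Existence follows from the intermediate value
theorem on `[|μ| + σ, |μ| + 2σ + 2]`, using `ω ≤ B ≤ ω + 1`.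
-/

open Real Set

theorem strictConvexOn_sinh : StrictConvexOn ℝ (Ici 0) sinh :=
  StrictMonoOn.strictConvexOn_of_deriv (convex_Ici 0) continuous_sinh.continuousOn
    (by rw [Real.deriv_sinh]; exact cosh_strictMonoOn.mono interior_subset)

theorem sinh_div_self_strictMonoOn : StrictMonoOn (fun x => sinh x / x) (Ioi 0) := by
  intro x hx y hy hxy
  simpa using strictConvexOn_sinh.secant_strict_mono (mem_Ici.2 le_rfl) (mem_Ici.2 hx.le)
    (mem_Ici.2 hy.le) hx.ne' hy.ne' hxy

theorem wsinh_pos {x : ℝ} (hx : 0 ≤ x) : 0 < wsinh x := by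
  rcases hx.eq_or_lt with rfl | hx
  · simp [wsinh]
  · rw [wsinh, if_neg hx.ne']
    exact div_pos hx (sinh_pos_iff.2 hx)

theorem wsinh_le_one {x : ℝ} (hx : 0 ≤ x) : wsinh x ≤ 1 := by
  rcases hx.eq_or_lt with rfl | hx
  · simp [wsinh]
  · rw [wsinh, if_neg hx.ne', div_le_one (sinh_pos_iff.2 hx)]
    exact self_le_sinh_iff.2 hx.le

theorem wsinh_strictAntiOn : StrictAntiOn wsinh (Ici 0) := by
  intro a ha b hb hab
  have hb0 : 0 < b := lt_of_le_of_lt ha hab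
  rw [wsinh, if_neg hb0.ne']
  rcases (mem_Ici.1 ha).eq_or_lt with rfl | ha0
  · rw [wsinh, if_pos rfl, div_lt_one (sinh_pos_iff.2 hb0)]
    exact self_lt_sinh_iff.2 hb0
  · rw [wsinh, if_neg ha0.ne']
    have := sinh_div_self_strictMonoOn ha0 hb0 hab
    rw [← inv_div, ← inv_div (sinh a)]
    exact inv_strictAnti₀ (div_pos (sinh_pos_iff.2 ha0) ha0) this

theorem wcoth_nonneg {x : ℝ} (hx : 0 ≤ x) : 0 ≤ wcoth x := by
  rcases hx.eq_or_lt with rfl | hx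
  · simp [wcoth]
  · rw [wcoth, if_neg hx.ne']
    have := sinh_pos_iff.2 hx
    positivity

theorem wcoth_sq (x : ℝ) : wcoth x ^ 2 = x ^ 2 + wsinh x ^ 2 := by
  by_cases hx : x = 0
  · simp [wcoth, wsinh, hx]
  · rw [wcoth, wsinh, if_neg hx, if_neg hx]
    have hs : sinh x ≠ 0 := sinh_ne_zero.2 hx
    field_simp
    linear_combination cosh_sq_sub_sinh_sq x

theorem self_le_wcoth {x : ℝ} (hx : 0 ≤ x) : x ≤ wcoth x :=
  abs_le_of_sq_le_sq' (by nlinarith [wcoth_sq x]) (wcoth_nonneg hx) |>.2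

theorem wcoth_le_add_one {x : ℝ} (hx : 0 ≤ x) : wcoth x ≤ x + 1 :=
  abs_le_of_sq_le_sq' (by nlinarith [wcoth_sq x, wsinh_le_one hx, wsinh_pos hx]) (by linarith) |>.2

theorem continuousOn_wcoth : ContinuousOn wcoth (Ioi 0) := by
  refine ContinuousOn.congr (f := fun x => x * cosh x / sinh x) ?_ fun x hx => ?_
  · exact (continuousOn_id.mul continuous_cosh.continuousOn).div continuous_sinh.continuousOn
      fun x hx => (sinh_pos_iff.2 hx).ne'
  · simp [wcoth, (mem_Ioi.1 hx).ne']

theorem continuousOn_wsinh : ContinuousOn wsinh (Ioi 0) := by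
  refine ContinuousOn.congr (f := fun x => x / sinh x) ?_ fun x hx => ?_
  · exact continuousOn_id.div continuous_sinh.continuousOn fun x hx => (sinh_pos_iff.2 hx).ne'
  · simp [wsinh, (mem_Ioi.1 hx).ne']

theorem continuousOn_gm (σ μ : ℝ) : ContinuousOn (gm σ μ) (Ioi 0) := by
  unfold gm
  have := continuousOn_wcoth
  have := continuousOn_wsinh
  fun_prop

theorem sqrt_sq_add_wsinh_sq_pos (μ : ℝ) {ω : ℝ} (hω : 0 ≤ ω) : 0 < √(μ ^ 2 + wsinh ω ^ 2) :=
  sqrt_pos.2 (by have := wsinh_pos hω; positivity)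

section Zeros

variable {σ μ ω : ℝ}

theorem sqrt_eq_wcoth_sub_of_gm_eq_zero (hω : 0 ≤ ω) (h : gm σ μ ω = 0) :
    √(μ ^ 2 + wsinh ω ^ 2) = wcoth ω - 2 * σ := by
  set C := √(μ ^ 2 + wsinh ω ^ 2)
  have hC : 0 < C := sqrt_sq_add_wsinh_sq_pos μ hω
  have hC2 : C ^ 2 = μ ^ 2 + wsinh ω ^ 2 := sq_sqrt (by positivity)
  have hfac : (C + wcoth ω) * (C - wcoth ω + 2 * σ) = 0 := by
    unfold gm at h
    linear_combination hC2 - wcoth_sq ω - h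
  have hpos : C + wcoth ω ≠ 0 := (add_pos_of_pos_of_nonneg hC (wcoth_nonneg hω)).ne'
  linear_combination (mul_eq_zero.1 hfac).resolve_left hpos

theorem sq_sub_sq_eq_of_gm_eq_zero (hω : 0 ≤ ω) (h : gm σ μ ω = 0) :
    ω ^ 2 - μ ^ 2 = 4 * σ * (wcoth ω - σ) := by
  unfold gm at h
  linear_combination h + 2 * σ * sqrt_eq_wcoth_sub_of_gm_eq_zero hω h

theorem abs_lt_of_gm_eq_zero (hσ : 0 < σ) (hω : 0 ≤ ω) (h : gm σ μ ω = 0) : |μ| < ω := by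
  have hC := sqrt_sq_add_wsinh_sq_pos μ hω
  have hB := wcoth_nonneg hω
  refine abs_lt_of_sq_lt_sq ?_ hω
  unfold gm at h
  nlinarith

theorem wcoth_lt_wcoth_of_gm_eq_zero {a b : ℝ} (ha : 0 ≤ a) (hab : a < b)
    (ha0 : gm σ μ a = 0) (hb0 : gm σ μ b = 0) : wcoth b < wcoth a := by
  have hb : 0 ≤ b := ha.trans hab.le
  have hW : wsinh b ^ 2 < wsinh a ^ 2 :=
    pow_lt_pow_left₀ (wsinh_strictAntiOn ha hb hab) (wsinh_pos hb).le two_ne_zero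
  have hC : √(μ ^ 2 + wsinh b ^ 2) < √(μ ^ 2 + wsinh a ^ 2) :=
    sqrt_lt_sqrt (by positivity) (by linarith)
  rw [sqrt_eq_wcoth_sub_of_gm_eq_zero ha ha0, sqrt_eq_wcoth_sub_of_gm_eq_zero hb hb0] at hC
  linarith

theorem eq_of_gm_eq_zero (hσ : 0 < σ) {a b : ℝ} (ha : 0 ≤ a) (hb : 0 ≤ b)
    (ha0 : gm σ μ a = 0) (hb0 : gm σ μ b = 0) : a = b := by
  have key : ∀ {x y : ℝ}, 0 ≤ x → x < y → gm σ μ x = 0 → gm σ μ y = 0 → False := by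
    intro x y hx hxy hx0 hy0
    have hB := wcoth_lt_wcoth_of_gm_eq_zero hx hxy hx0 hy0
    have hsq : x ^ 2 < y ^ 2 := pow_lt_pow_left₀ hxy hx two_ne_zero
    have hx' := sq_sub_sq_eq_of_gm_eq_zero hx hx0
    have hy' := sq_sub_sq_eq_of_gm_eq_zero (hx.trans hxy.le) hy0
    nlinarith
  rcases lt_trichotomy a b with h | h | h
  · exact (key ha h ha0 hb0).elim
  · exact h
  · exact (key hb h hb0 ha0).elim

end Zeros

theorem gm_abs_add_neg {σ : ℝ} (hσ : 0 < σ) (μ : ℝ) : gm σ μ (|μ| + σ) < 0 := by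
  have hω : 0 ≤ |μ| + σ := by positivity
  have hB := self_le_wcoth hω
  have hC : |μ| ≤ √(μ ^ 2 + wsinh (|μ| + σ) ^ 2) := abs_le_sqrt (by nlinarith)
  unfold gm
  nlinarith [sq_abs μ, abs_nonneg μ]

theorem gm_abs_add_pos {σ : ℝ} (hσ : 0 < σ) (μ : ℝ) : 0 < gm σ μ (|μ| + 2 * σ + 2) := by
  have hω : 0 ≤ |μ| + 2 * σ + 2 := by positivity
  have hB := wcoth_le_add_one hω
  have hC : √(μ ^ 2 + wsinh (|μ| + 2 * σ + 2) ^ 2) ≤ |μ| + 1 :=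
    (sqrt_le_left (by positivity)).2
      (by nlinarith [sq_abs μ, abs_nonneg μ, wsinh_le_one hω, wsinh_pos hω])
  unfold gm
  nlinarith [sq_abs μ, abs_nonneg μ]

theorem exists_gm_eq_zero {σ : ℝ} (hσ : 0 < σ) (μ : ℝ) : ∃ ω, 0 < ω ∧ gm σ μ ω = 0 := by
  have hpos : 0 < |μ| + σ := by positivity
  obtain ⟨ω, hω, h⟩ := intermediate_value_Icc (by linarith : |μ| + σ ≤ |μ| + 2 * σ + 2)
    ((continuousOn_gm σ μ).mono fun x hx => hpos.trans_le hx.1)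
    ⟨(gm_abs_add_neg hσ μ).le, (gm_abs_add_pos hσ μ).le⟩
  exact ⟨ω, hpos.trans_le hω.1, h⟩

/-- Lemma 2.1, first part: there is a unique `ω ≥ 0` with `g₁(ω) = 0`,
and this unique zero `ω₁` satisfies `ω₁ > |μ|`. -/
theorem stmt11 (σ μ : ℝ) (hσ : 0 < σ) :
    ∃ ω₁ : ℝ, (0 ≤ ω₁ ∧ gm σ μ ω₁ = 0 ∧ |μ| < ω₁) ∧
      ∀ ω : ℝ, 0 ≤ ω → gm σ μ ω = 0 → ω = ω₁ := by
  obtain ⟨ω₁, hω₁, h₁⟩ := exists_gm_eq_zero hσ μ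
  exact ⟨ω₁, ⟨hω₁.le, h₁, abs_lt_of_gm_eq_zero hσ hω₁.le h₁⟩,
    fun ω hω h => eq_of_gm_eq_zero hσ hω hω₁.le h h₁⟩
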